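/- Let $A$ be a commutative ring, $M$ a finitely generated $A$-module, and $N$ an $A$-module with no nonzero Artinian submodules. If $0 \to M' \to M \to N \to 0$ is a short exact sequence of $A$-modules, then the maximal Artinian submodules of $M'$ (viewed inside $M$ via the injection) and of $M$ coincide: $S_0 M' = S_0 M$. -/

import Mathlib

/-
An Artinian submodule of `M` maps to an Artinian submodule of `N`, hence to zero, so `S₀ M`
lies in `ker g = range f`. An Artinian submodule inside `range f` is the image of its preimage
under the injection `f`, and that preimage is Artinian, hence contained in `S₀ M'`.
-/

/-- The maximal Artinian submodule `S₀ M`: the sum of all Artinian submodules. -/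
def maxArtinian (A : Type) [CommRing A] (M : Type) [AddCommGroup M] [Module A M] :
    Submodule A M :=
  sSup {N : Submodule A M | IsArtinian A N}

section

variable {A M M' N : Type} [CommRing A] [AddCommGroup M] [AddCommGroup M'] [AddCommGroup N]
  [Module A M] [Module A M'] [Module A N]

theorem le_maxArtinian (P : Submodule A M) [IsArtinian A P] : P ≤ maxArtinian A M :=
  le_sSup ‹IsArtinian A P›

theorem maxArtinian_eq_bot (h : ∀ Q : Submodule A N, IsArtinian A Q → Q = ⊥) :
    maxArtinian A N = ⊥ :=
  sSup_eq_bot.mpr h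

theorem map_maxArtinian_le (g : M →ₗ[A] N) : (maxArtinian A M).map g ≤ maxArtinian A N := by
  refine Submodule.map_le_iff_le_comap.mpr <| sSup_le fun P (hP : IsArtinian A P) ↦ ?_
  have : IsArtinian A (P.map g) :=
    isArtinian_of_surjective P (g.submoduleMap P) (g.submoduleMap_surjective P)
  exact Submodule.map_le_iff_le_comap.mp (le_maxArtinian _)

theorem maxArtinian_le_ker (g : M →ₗ[A] N)
    (h : ∀ Q : Submodule A N, IsArtinian A Q → Q = ⊥) : maxArtinian A M ≤ LinearMap.ker g := by
  rw [LinearMap.le_ker_iff_map, ← le_bot_iff, ← maxArtinian_eq_bot h]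
  exact map_maxArtinian_le g

theorem maxArtinian_le_map_of_injective {f : M' →ₗ[A] M} (hf : Function.Injective f)
    (h : maxArtinian A M ≤ LinearMap.range f) : maxArtinian A M ≤ (maxArtinian A M').map f := by
  refine sSup_le fun P (hP : IsArtinian A P) ↦ ?_
  have : IsArtinian A (P.comap f) :=
    isArtinian_of_injective (f.restrict fun _ hx ↦ hx) fun _ _ hxy ↦
      Subtype.ext (hf (Subtype.ext_iff.mp hxy))
  have hPf : P ≤ LinearMap.range f := (le_maxArtinian P).trans h
  have himage : (P.comap f).map f = P := by
    rw [Submodule.map_comap_eq, inf_eq_right.mpr hPf]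
  exact himage ▸ Submodule.map_mono (le_maxArtinian _)

end

theorem maxArtinian_eq_of_ses_general (A M' M N : Type) [CommRing A]
    [AddCommGroup M'] [AddCommGroup M] [AddCommGroup N]
    [Module A M'] [Module A M] [Module A N]
    (hN : ∀ Q : Submodule A N, IsArtinian A Q → Q = ⊥)
    (f : M' →ₗ[A] M) (g : M →ₗ[A] N)
    (hf : Function.Injective f)
    (hex : LinearMap.range f = LinearMap.ker g) :
    Submodule.map f (maxArtinian A M') = maxArtinian A M :=
  le_antisymm (map_maxArtinian_le f)
    (maxArtinian_le_map_of_injective hf (hex ▸ maxArtinian_le_ker g hN))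

/-- Given a short exact sequence `0 → M' → M → N → 0` of modules over a
commutative ring with `M` finitely generated and `N` having no nonzero Artinian
submodules, the maximal Artinian submodules of `M'` (viewed inside `M`) and of `M`
coincide. -/
theorem maxArtinian_eq_of_ses (A M' M N : Type) [CommRing A]
    [AddCommGroup M'] [AddCommGroup M] [AddCommGroup N]
    [Module A M'] [Module A M] [Module A N] [Module.Finite A M]
    (hN : ∀ Q : Submodule A N, IsArtinian A Q → Q = ⊥)
    (f : M' →ₗ[A] M) (g : M →ₗ[A] N)
    (hf : Function.Injective f) (hg : Function.Surjective g)
    (hex : LinearMap.range f = LinearMap.ker g) :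
    Submodule.map f (maxArtinian A M') = maxArtinian A M :=
  maxArtinian_eq_of_ses_general A M' M N hN f g hf hex
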